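/- arXiv:1507.04718 — 2 statements merged into one kernel-verified Lean document; each statement's English description precedes it below -/
import Mathlib

section
/- Let f : (Fin 30 → ℝ) → ℝ be Ackley's function f(x) = -20·exp(-0.2·√((1/30)·∑_{n=1}^{30} x_n²)) - exp((1/30)·∑_{n=1}^{30} cos(2πx_n)) + 20 + e. Then f(0) = 0 and f(x) ≥ 0 for all x ∈ ℝ³⁰, so the origin is a global minimum point of f with minimum value 0. -/
open Real Finset

/-- Ackley's function on ℝ³⁰:
`f(x) = -20 exp(-0.2 √((1/30) ∑ x_n²)) - exp((1/30) ∑ cos(2π x_n)) + 20 + e`. -/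
noncomputable def ackley (x : Fin 30 → ℝ) : ℝ :=
  -20 * Real.exp (-0.2 * Real.sqrt ((1 / 30) * ∑ n : Fin 30, (x n) ^ 2)) -
    Real.exp ((1 / 30) * ∑ n : Fin 30, Real.cos (2 * Real.pi * x n)) + 20 + Real.exp 1

theorem ackley_global_min :
    ackley 0 = 0 ∧ (∀ x : Fin 30 → ℝ, 0 ≤ ackley x) := by
  constructor
  · simp [ackley, Real.sqrt_zero]; ring
  · intro x
    have h1 : Real.exp (-0.2 * Real.sqrt ((1 / 30) * ∑ n : Fin 30, (x n) ^ 2)) ≤ 1 := by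
      apply Real.exp_le_one_iff.mpr
      have hs : 0 ≤ Real.sqrt ((1 / 30) * ∑ n : Fin 30, (x n) ^ 2) := Real.sqrt_nonneg _
      nlinarith
    have h2 : Real.exp ((1 / 30) * ∑ n : Fin 30, Real.cos (2 * Real.pi * x n)) ≤ Real.exp 1 := by
      apply Real.exp_le_exp.mpr
      have hc : ∑ n : Fin 30, Real.cos (2 * Real.pi * x n) ≤ 30 := by
        calc ∑ n : Fin 30, Real.cos (2 * Real.pi * x n) ≤ ∑ _n : Fin 30, (1 : ℝ) :=
          Finset.sum_le_sum fun i _ => Real.cos_le_one _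
        _ = 30 := by simp
      linarith
    unfold ackley
    nlinarith
end

section
/- Let f : (Fin 30 → ℝ) → ℝ be the generalized Griewank function f(x) = (1/4000)·∑_{n=1}^{30} x_n² - ∏_{n=1}^{30} cos(x_n/√n) + 1. Then f(x) ≥ 0 for all x ∈ ℝ³⁰, and f(x) = 0 if and only if x = 0. -/
open Real Finset

/-- The generalized Griewank function on ℝ³⁰:
`f(x) = (1/4000) ∑_{n=1}^{30} x_n² - ∏_{n=1}^{30} cos(x_n/√n) + 1`,
with `Fin 30` index `n` corresponding to the coordinate `n+1`. -/
noncomputable def griewank (x : Fin 30 → ℝ) : ℝ :=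
  (1 / 4000) * ∑ n : Fin 30, (x n) ^ 2 -
    ∏ n : Fin 30, Real.cos (x n / Real.sqrt ((n : ℝ) + 1)) + 1

lemma prod_cos_le_one (x : Fin 30 → ℝ) :
    ∏ n : Fin 30, Real.cos (x n / Real.sqrt ((n : ℝ) + 1)) ≤ 1 := by
  calc ∏ n : Fin 30, Real.cos (x n / Real.sqrt ((n : ℝ) + 1))
      ≤ |∏ n : Fin 30, Real.cos (x n / Real.sqrt ((n : ℝ) + 1))| := le_abs_self _
    _ = ∏ n : Fin 30, |Real.cos (x n / Real.sqrt ((n : ℝ) + 1))| := by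
        rw [Finset.abs_prod]
    _ ≤ 1 := Finset.prod_le_one (fun _ _ => abs_nonneg _)
        (fun i _ => Real.abs_cos_le_one _)

lemma sum_sq_nonneg (x : Fin 30 → ℝ) : 0 ≤ ∑ n : Fin 30, (x n) ^ 2 :=
  Finset.sum_nonneg fun _ _ => sq_nonneg _

theorem griewank_global_min :
    (∀ x : Fin 30 → ℝ, 0 ≤ griewank x) ∧
    (∀ x : Fin 30 → ℝ, griewank x = 0 ↔ x = 0) := by
  constructor
  · intro x
    have h1 := prod_cos_le_one x
    have h2 := sum_sq_nonneg x
    unfold griewank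
    linarith
  · intro x
    constructor
    · intro h
      have h1 := prod_cos_le_one x
      have h2 := sum_sq_nonneg x
      unfold griewank at h
      have hsum : ∑ n : Fin 30, (x n) ^ 2 = 0 := by linarith
      have hz : ∀ n ∈ (Finset.univ : Finset (Fin 30)), (x n) ^ 2 = 0 :=
        (Finset.sum_eq_zero_iff_of_nonneg fun _ _ => sq_nonneg _).mp hsum
      funext n
      have := hz n (Finset.mem_univ n)
      exact pow_eq_zero_iff (by norm_num) |>.mp this
    · rintro rfl
      unfold griewank
      simp
end
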